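/- Assume ZF and that 𝒞_{ω₁} is a normal filter on ω₁. If Measuring* holds, then 𝒞_{ω₁} is an ultrafilter on ω₁. -/

import Mathlib

noncomputable def omega1 : Ordinal.{0} := (Cardinal.aleph 1).ord

def IsClub' (C : Set Ordinal) : Prop :=
  C ⊆ Set.Iio omega1 ∧
    (∀ δ, δ < omega1 → δ ≠ 0 → sSup (C ∩ Set.Iio δ) = δ → δ ∈ C) ∧
    ∀ α, α < omega1 → ∃ β ∈ C, α < β

def IsStationary' (S : Set Ordinal) : Prop :=
  S ⊆ Set.Iio omega1 ∧ ∀ C, IsClub' C → (S ∩ C).Nonempty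

/-- The collection `𝒞_{ω₁}` of subsets of `ω₁` containing a club. -/
def ClubFilter : Set (Set Ordinal) :=
  {X | ∃ C, IsClub' C ∧ C ⊆ X}

/-- Normality of `𝒞_{ω₁}`: closure under diagonal intersections. -/
def ClubFilterNormal : Prop :=
  ∀ W : Ordinal → Set Ordinal, (∀ α, α < omega1 → W α ∈ ClubFilter) →
    {δ | δ < omega1 ∧ ∀ α < δ, δ ∈ W α} ∈ ClubFilter

/-- The principle `Measuring*`: every sequence of arbitrary subsets `X δ ⊆ δ`
(for limit `δ < ω₁`) is measured by some club. -/
def MeasuringStar : Prop :=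
  ∀ X : Ordinal → Set Ordinal,
    (∀ δ, δ < omega1 → Order.IsSuccLimit δ → X δ ⊆ Set.Iio δ) →
    ∃ C, IsClub' C ∧ ∀ δ ∈ C, Order.IsSuccLimit δ →
      ∃ α < δ, ((C ∩ Set.Iio δ) \ Set.Iio α ⊆ X δ ∨
        ((C ∩ Set.Iio δ) \ Set.Iio α) ∩ X δ = ∅)

/-!
Apply Measuring* to `X δ = S ∩ δ`, obtaining a club `C`, and pass to the club `E` of limit
points of `C`. Each `δ ∈ E` is then decided: a tail of `C ∩ δ` lies in `S` or in its
complement. The points of each kind form a closed set, because two tails of `C` below points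
cofinal in `δ` cannot lie in disjoint sets; so one kind contains a club `A`. By normality
(Fodor's lemma) the start of the tail is the same ordinal `α` for unboundedly many `δ ∈ A`,
and then all of `C \ α` lies in `S`, resp. in its complement.
-/

open Set

lemma omega1_isSuccLimit : Order.IsSuccLimit omega1 :=
  Cardinal.isSuccLimit_ord (Cardinal.aleph0_le_aleph 1)

lemma one_lt_omega1 : 1 < omega1 := by
  simpa using omega1_isSuccLimit.succ_lt omega1_isSuccLimit.bot_lt

def CofinalIn (C : Set Ordinal) (δ : Ordinal) : Prop :=
  ∀ β < δ, ∃ x ∈ C, β < x ∧ x < δ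

lemma CofinalIn.mono {C D : Set Ordinal} {δ : Ordinal} (hCD : C ⊆ D) (h : CofinalIn C δ) :
    CofinalIn D δ := fun β hβ =>
  let ⟨x, hxC, hx⟩ := h β hβ
  ⟨x, hCD hxC, hx⟩

lemma CofinalIn.isSuccLimit {C : Set Ordinal} {δ : Ordinal} (h : CofinalIn C δ) (hδ : δ ≠ 0) :
    Order.IsSuccLimit δ := by
  refine Ordinal.isSuccLimit_iff.2 ⟨hδ, Order.isSuccPrelimit_of_succ_lt fun β hβ => ?_⟩
  obtain ⟨x, -, hβx, hxδ⟩ := h β hβ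
  exact (Order.succ_le_of_lt hβx).trans_lt hxδ

lemma sSup_inter_Iio_eq_iff {C : Set Ordinal} {δ : Ordinal} :
    sSup (C ∩ Iio δ) = δ ↔ CofinalIn C δ := by
  have hbdd : BddAbove (C ∩ Iio δ) := ⟨δ, fun x hx => hx.2.le⟩
  constructor
  · intro h β hβ
    obtain ⟨x, ⟨hxC, hxδ⟩, hβx⟩ := exists_lt_of_lt_csSup' (h ▸ hβ)
    exact ⟨x, hxC, hβx, hxδ⟩
  · intro h
    refine le_antisymm (csSup_le' fun x hx => hx.2.le) (le_of_forall_lt fun β hβ => ?_)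
    obtain ⟨x, hxC, hβx, hxδ⟩ := h β hβ
    exact lt_csSup_of_lt hbdd ⟨hxC, hxδ⟩ hβx

lemma isClub'_iff {C : Set Ordinal} :
    IsClub' C ↔ C ⊆ Iio omega1 ∧ (∀ δ < omega1, δ ≠ 0 → CofinalIn C δ → δ ∈ C) ∧
      ∀ α < omega1, ∃ β ∈ C, α < β := by
  simp only [IsClub', sSup_inter_Iio_eq_iff]

lemma IsClub'.mem_of_cofinalIn {C : Set Ordinal} (hC : IsClub' C) {δ : Ordinal}
    (hδ : δ < omega1) (hδ0 : δ ≠ 0) (h : CofinalIn C δ) : δ ∈ C :=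
  (isClub'_iff.1 hC).2.1 δ hδ hδ0 h

lemma isClub'_Iio_omega1 : IsClub' (Iio omega1) :=
  isClub'_iff.2 ⟨subset_rfl, fun _ hδ _ _ => hδ,
    fun α hα => ⟨Order.succ α, omega1_isSuccLimit.succ_lt hα, Order.lt_succ α⟩⟩

lemma IsClub'.inter_Ioi {C : Set Ordinal} (hC : IsClub' C) {β : Ordinal} (hβ : β < omega1) :
    IsClub' (C ∩ Ioi β) := by
  refine isClub'_iff.2 ⟨fun x hx => hC.1 hx.1, fun δ hδ hδ0 h => ?_, fun α hα => ?_⟩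
  · obtain ⟨x, hx, -, hxδ⟩ := h 0 (pos_iff_ne_zero.2 hδ0)
    exact ⟨hC.mem_of_cofinalIn hδ hδ0 (h.mono inter_subset_left), hx.2.trans hxδ⟩
  · obtain ⟨x, hxC, hx⟩ := hC.2.2 (max α β) (max_lt hα hβ)
    exact ⟨x, ⟨hxC, (le_max_right α β).trans_lt hx⟩, (le_max_left α β).trans_lt hx⟩

lemma ClubFilter.mem_of_subset {X Y : Set Ordinal} (hX : X ∈ ClubFilter) (hXY : X ⊆ Y) :
    Y ∈ ClubFilter :=
  let ⟨C, hC, hCX⟩ := hX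
  ⟨C, hC, hCX.trans hXY⟩

namespace ClubFilterNormal

variable (hnormal : ClubFilterNormal)
include hnormal

lemma inter_nonempty {C D : Set Ordinal} (hC : IsClub' C) (hD : IsClub' D) :
    (C ∩ D).Nonempty := by
  let W : Ordinal → Set Ordinal := Function.update (fun _ => D) 0 C
  obtain ⟨E, hE, hEW⟩ := hnormal W fun α _ => by
    by_cases hα : α = 0
    · subst hα; exact ⟨C, hC, by simp [W]⟩
    · exact ⟨D, hD, by simp [W, hα]⟩
  obtain ⟨δ, hδE, hδ⟩ := hE.2.2 1 one_lt_omega1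
  have hδW := (hEW hδE).2
  have h0 : δ ∈ W 0 := hδW 0 (zero_lt_one.trans hδ)
  have h1 : δ ∈ W 1 := hδW 1 hδ
  simp only [W, Function.update_self, ne_eq, one_ne_zero, not_false_eq_true,
    Function.update_of_ne] at h0 h1
  exact ⟨δ, h0, h1⟩

lemma exists_isClub'_cofinalIn {C : Set Ordinal} (hC : IsClub' C) :
    ∃ E, IsClub' E ∧ ∀ δ ∈ E, δ ≠ 0 ∧ CofinalIn C δ := by
  obtain ⟨E, hE, hEW⟩ := hnormal (fun α => {δ | ∃ x ∈ C, α < x ∧ x < δ}) fun α hα => by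
    obtain ⟨β, hβC, hαβ⟩ := hC.2.2 α hα
    exact ⟨C ∩ Ioi β, hC.inter_Ioi (hC.1 hβC), fun δ hδ => ⟨β, hβC, hαβ, hδ.2⟩⟩
  refine ⟨E ∩ Ioi 0, hE.inter_Ioi omega1_isSuccLimit.bot_lt, fun δ hδ => ?_⟩
  exact ⟨hδ.2.ne', (hEW hδ.1).2⟩

/-- Fodor's lemma, in the form of a regressive choice of witnesses. -/
lemma exists_unbounded_fiber {A : Set Ordinal} (hA : IsClub' A) {P : Ordinal → Ordinal → Prop}
    (hP : ∀ γ ∈ A, ∃ α < γ, P γ α) :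
    ∃ α < omega1, ∀ β < omega1, ∃ γ ∈ A, β < γ ∧ P γ α := by
  by_contra! hbdd
  obtain ⟨D, hD, hDW⟩ := hnormal (fun α => {γ | γ ∈ A → ¬P γ α}) fun α hα => by
    obtain ⟨β, hβ, hβA⟩ := hbdd α hα
    exact ClubFilter.mem_of_subset ⟨_, isClub'_Iio_omega1.inter_Ioi hβ, subset_rfl⟩
      fun γ hγ hγA => hβA γ hγA hγ.2
  obtain ⟨δ, hδA, hδD⟩ := hnormal.inter_nonempty hA hD
  obtain ⟨α, hαδ, hPα⟩ := hP δ hδA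
  exact (hDW hδD).2 α hαδ hδA hPα

end ClubFilterNormal

def TailSubset (C : Set Ordinal) (γ : Ordinal) (Y : Set Ordinal) : Prop :=
  ∃ α < γ, C ∩ Ico α γ ⊆ Y

lemma mem_clubFilter_of_forall_tailSubset (hnormal : ClubFilterNormal) {A C Y : Set Ordinal}
    (hC : IsClub' C) (hA : IsClub' A) (h : ∀ γ ∈ A, TailSubset C γ Y) : Y ∈ ClubFilter := by
  obtain ⟨α, hα, hfiber⟩ := hnormal.exists_unbounded_fiber hA h
  refine ⟨C ∩ Ioi α, hC.inter_Ioi hα, fun x ⟨hxC, hαx⟩ => ?_⟩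
  obtain ⟨γ, -, hxγ, hY⟩ := hfiber x (hC.1 hxC)
  exact hY ⟨hxC, hαx.le, hxγ⟩

section Dichotomy

variable {C E Y Z : Set Ordinal} (hE : IsClub' E) (hEC : ∀ δ ∈ E, CofinalIn C δ)
  (hYZ : Disjoint Y Z) (hdec : ∀ δ ∈ E, TailSubset C δ Y ∨ TailSubset C δ Z)
include hE hEC hYZ hdec

lemma isClub'_setOf_tailSubset (hunb : ∀ α < omega1, ∃ γ ∈ E, α < γ ∧ TailSubset C γ Y) :
    IsClub' {γ ∈ E | TailSubset C γ Y} := by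
  refine isClub'_iff.2 ⟨fun γ hγ => hE.1 hγ.1, fun δ hδ hδ0 hcof => ?_,
    fun α hα => (hunb α hα).imp fun γ ⟨hγE, hαγ, hY⟩ => ⟨⟨hγE, hY⟩, hαγ⟩⟩
  have hδE : δ ∈ E := hE.mem_of_cofinalIn hδ hδ0 (hcof.mono (sep_subset E _))
  refine ⟨hδE, (hdec δ hδE).resolve_right fun ⟨α, hαδ, hZ⟩ => ?_⟩
  obtain ⟨γ, ⟨hγE, α', hα'γ, hY⟩, hαγ, hγδ⟩ := hcof α hαδ
  obtain ⟨x, hxC, hx, hxγ⟩ := hEC γ hγE (max α α') (max_lt hαγ hα'γ)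
  exact disjoint_left.1 hYZ (hY ⟨hxC, (le_max_right α α').trans hx.le, hxγ⟩)
    (hZ ⟨hxC, (le_max_left α α').trans hx.le, hxγ.trans hγδ⟩)

lemma exists_isClub'_forall_tailSubset_or :
    ∃ A, IsClub' A ∧ ((∀ γ ∈ A, TailSubset C γ Y) ∨ ∀ γ ∈ A, TailSubset C γ Z) := by
  by_cases hunb : ∀ α < omega1, ∃ γ ∈ E, α < γ ∧ TailSubset C γ Y
  · exact ⟨_, isClub'_setOf_tailSubset hE hEC hYZ hdec hunb, .inl fun γ hγ => hγ.2⟩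
  push Not at hunb
  obtain ⟨α₀, hα₀, hbdd⟩ := hunb
  have hunbZ : ∀ α < omega1, ∃ γ ∈ E, α < γ ∧ TailSubset C γ Z := fun α hα => by
    obtain ⟨γ, hγE, hγ⟩ := hE.2.2 (max α α₀) (max_lt hα hα₀)
    exact ⟨γ, hγE, (le_max_left α α₀).trans_lt hγ,
      (hdec γ hγE).resolve_left (hbdd γ hγE ((le_max_right α α₀).trans_lt hγ))⟩
  exact ⟨_, isClub'_setOf_tailSubset hE hEC hYZ.symm (fun δ hδ => (hdec δ hδ).symm) hunbZ,
    .inr fun γ hγ => hγ.2⟩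

end Dichotomy

lemma inter_Iio_diff_Iio (C : Set Ordinal) (α δ : Ordinal) :
    (C ∩ Iio δ) \ Iio α = C ∩ Ico α δ := by
  ext x
  simp only [mem_sdiff, mem_inter_iff, mem_Iio, mem_Ico, not_lt]
  tauto

theorem stmt8 (hnormal : ClubFilterNormal) (hms : MeasuringStar) :
    ∀ S : Set Ordinal, S ⊆ Set.Iio omega1 →
      S ∈ ClubFilter ∨ (Set.Iio omega1 \ S) ∈ ClubFilter := by
  intro S _
  obtain ⟨C, hC, hmeas⟩ := hms (fun δ => S ∩ Iio δ) fun _ _ _ => inter_subset_right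
  obtain ⟨E, hE, hEC⟩ := hnormal.exists_isClub'_cofinalIn hC
  have hdec : ∀ δ ∈ E, TailSubset C δ S ∨ TailSubset C δ (Iio omega1 \ S) := by
    intro δ hδE
    obtain ⟨hδ0, hcof⟩ := hEC δ hδE
    obtain ⟨α, hαδ, hS | hSc⟩ := hmeas δ (hC.mem_of_cofinalIn (hE.1 hδE) hδ0 hcof)
      (hcof.isSuccLimit hδ0)
    · exact .inl ⟨α, hαδ, fun x hx => (hS (inter_Iio_diff_Iio C α δ ▸ hx)).1⟩
    · refine .inr ⟨α, hαδ, fun x hx => ⟨hC.1 hx.1, fun hxS => ?_⟩⟩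
      exact hSc.subset ⟨inter_Iio_diff_Iio C α δ ▸ hx, hxS, hx.2.2⟩
  obtain ⟨A, hA, hS | hSc⟩ := exists_isClub'_forall_tailSubset_or hE (fun δ hδ => (hEC δ hδ).2)
    disjoint_sdiff_right hdec
  · exact .inl (mem_clubFilter_of_forall_tailSubset hnormal hC hA hS)
  · exact .inr (mem_clubFilter_of_forall_tailSubset hnormal hC hA hSc)
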